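/- Let e ≥ 0 and m, p ≥ 0 be integers. Define ε(a,b) := 2pb + 2am - 5ab + a + b + (1 + 4m - 5b)be/2 for integers a, b ≥ 0 with p ≥ 2a and m ≥ 2b. Then for all such (a,b) with a + b ≥ 1, one has ε(a,b) ≥ min(ε(1,0), ε(0,1)) = min(2m + 1, 2p + 1 + 2e(m-1)), provided p ≥ 2 when the pair (1,0) is used and m ≥ 2 when the pair (0,1) is used; more precisely, for b ≥ 1, ε(a,b) - ε(0,1) ≥ (3a + 1 + (3b - 4)e/2)(b - 1) ≥ 0, and for b = 0, ε(a,0) = a(2m+1) ≥ 2m + 1 whenever a ≥ 1. -/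
import Mathlib


/-- The codimension in `|𝒪(pF + mG)|` on the Hirzebruch surface `𝔽_e` of the
locus of nonreduced curves `D = A + 2B` with `B ~ aF + bG`. -/
def epsHirz (e m p a b : ℤ) : ℤ :=
  2 * p * b + 2 * a * m - 5 * a * b + a + b + (1 + 4 * m - 5 * b) * b * e / 2

lemma epsHirz_exact (e m p a b c : ℤ) (hc : b * (b + 1) = c + c) :
    epsHirz e m p a b =
      2 * p * b + 2 * a * m - 5 * a * b + a + b + (2 * m * b - 3 * b * b + c) * e := by
  unfold epsHirz
  have h : (1 + 4 * m - 5 * b) * b * e = 2 * ((2 * m * b - 3 * b * b + c) * e) := by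
    linear_combination e * hc
  rw [h, Int.mul_ediv_cancel_left _ two_ne_zero]

lemma exists_half (b : ℤ) : ∃ c, b * (b + 1) = c + c := by
  rcases Int.even_mul_succ_self b with ⟨c, hc⟩
  exact ⟨c, hc⟩

/-- For `e ≥ 0`, `m, p ≥ 0`, and `a, b ≥ 0` with `p ≥ 2a`, `m ≥ 2b`, `a + b ≥ 1`:
`ε(a,b) ≥ min(ε(1,0), ε(0,1)) = min(2m+1, 2p+1+2e(m-1))` (given `p ≥ 2` when
`(1,0)` is admissible and `m ≥ 2` when `(0,1)` is admissible); more precisely,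
for `b ≥ 1`, `ε(a,b) - ε(0,1) ≥ (3a+1+(3b-4)e/2)(b-1) ≥ 0`, and for `b = 0`,
`ε(a,0) = a(2m+1) ≥ 2m+1` when `a ≥ 1`. -/
theorem stmt_2 (e m p : ℤ) (he : 0 ≤ e) (hm : 0 ≤ m) (hp : 0 ≤ p)
    (a b : ℤ) (ha : 0 ≤ a) (hb : 0 ≤ b) (hpa : 2 * a ≤ p) (hmb : 2 * b ≤ m)
    (hab : 1 ≤ a + b) :
    (1 ≤ b →
      (3 * a + 1 + (3 * b - 4) * e / 2) * (b - 1) ≤ epsHirz e m p a b - epsHirz e m p 0 1 ∧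
      0 ≤ (3 * a + 1 + (3 * b - 4) * e / 2) * (b - 1)) ∧
    (b = 0 → epsHirz e m p a 0 = a * (2 * m + 1) ∧ (1 ≤ a → 2 * m + 1 ≤ epsHirz e m p a 0)) ∧
    (2 ≤ p → 2 ≤ m →
      min (epsHirz e m p 1 0) (epsHirz e m p 0 1)
          = min (2 * m + 1) (2 * p + 1 + 2 * e * (m - 1))
      ∧
      min (2 * m + 1) (2 * p + 1 + 2 * e * (m - 1)) ≤ epsHirz e m p a b) := by
  obtain ⟨c, hc⟩ := exists_half b
  have hE := epsHirz_exact e m p a b c hc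
  have hE01 : epsHirz e m p 0 1 = 2 * p + 1 + 2 * e * (m - 1) :=
    by rw [epsHirz_exact e m p 0 1 1 (by ring)]; ring
  have hE10 : epsHirz e m p 1 0 = 2 * m + 1 :=
    by rw [epsHirz_exact e m p 1 0 0 (by ring)]; ring
  have hEa0 : epsHirz e m p a 0 = a * (2 * m + 1) :=
    by rw [epsHirz_exact e m p a 0 0 (by ring)]; ring
  set D := (3 * b - 4) * e / 2 with hD
  have hdiv := Int.mul_ediv_add_emod ((3 * b - 4) * e) 2
  have hmod0 : 0 ≤ (3 * b - 4) * e % 2 := Int.emod_nonneg _ two_ne_zero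
  have hmod1 : (3 * b - 4) * e % 2 < 2 := Int.emod_lt_of_pos _ (by norm_num)
  have part1 : 1 ≤ b →
      (3 * a + 1 + D) * (b - 1) ≤ epsHirz e m p a b - epsHirz e m p 0 1 ∧
      0 ≤ (3 * a + 1 + D) * (b - 1) := by
    intro hb1
    have hb1' : 0 ≤ b - 1 := by linarith
    rcases eq_or_lt_of_le hb1 with h | h
    · subst h
      have hc1 : c = 1 := by linarith [hc]
      subst hc1
      constructor
      · rw [hE, hE01]
        nlinarith [mul_nonneg ha (by linarith : (0:ℤ) ≤ m - 2)]
      · simp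
    · have hb2 : 2 ≤ b := h
      have hDnn : 0 ≤ D := by
        rw [hD]
        exact Int.ediv_nonneg (by nlinarith) (by norm_num)
      constructor
      · rw [hE, hE01]
        nlinarith [mul_nonneg (by linarith : (0:ℤ) ≤ p - 2 * a) hb1',
          mul_nonneg ha (by linarith : (0:ℤ) ≤ m - 2 * b),
          mul_nonneg (mul_nonneg he hb1') (by linarith : (0:ℤ) ≤ m - 2 * b),
          mul_nonneg hb1' (by linarith : (0:ℤ) ≤ (3 * b - 4) * e - 2 * D)]
      · exact mul_nonneg (by linarith) hb1'
  refine ⟨part1, ?_, ?_⟩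
  · intro hb0
    refine ⟨hEa0, fun ha1 => ?_⟩
    rw [hEa0]; nlinarith
  · intro hp2 hm2
    rw [hE10, hE01]
    refine ⟨rfl, ?_⟩
    rcases eq_or_lt_of_le hb with h | h
    · have hb0 : b = 0 := h.symm
      have ha1 : 1 ≤ a := by omega
      subst hb0
      rw [hEa0] at *
      have : 2 * m + 1 ≤ a * (2 * m + 1) := by nlinarith
      calc min (2 * m + 1) (2 * p + 1 + 2 * e * (m - 1)) ≤ 2 * m + 1 := min_le_left _ _
        _ ≤ a * (2 * m + 1) := this
    · have hb1 : 1 ≤ b := h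
      obtain ⟨h1, h2⟩ := part1 hb1
      calc min (2 * m + 1) (2 * p + 1 + 2 * e * (m - 1))
          ≤ 2 * p + 1 + 2 * e * (m - 1) := min_le_right _ _
        _ = epsHirz e m p 0 1 := hE01.symm
        _ ≤ epsHirz e m p a b := by linarith
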